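/- arXiv:quant-ph/0605060 — 3 statements merged into one kernel-verified Lean document; each statement's English description precedes it below -/
import Mathlib

section
/- Let S = [[A, B],[C, D]] be a real symplectic 2n×2n matrix and M a complex symmetric n×n matrix with Im M positive definite. Then A + BM is invertible. -/
/-!
With `X = [1; M]` and `J = [[0, 1], [-1, 0]]`, the form `Z ↦ Zᴴ J Z` is invariant under the real
symplectic `S`, and `S X = [A + B M; C + D M]`. Hence
`(A + B M)ᴴ (C + D M) - (C + D M)ᴴ (A + B M) = Xᴴ J X = M - Mᴴ = 2i Im M`.
If `(A + B M) v = 0`, the left side gives `vᴴ (Im M) v = 0`, which forces `v = 0` because the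
complexification of the positive definite `Im M` is again positive definite.
-/

open Matrix

open scoped ComplexOrder

namespace Matrix

variable {n : Type*}

theorem IsSymm.sub_conjTranspose_eq {M : Matrix n n ℂ} (hM : M.IsSymm) :
    M - Mᴴ = (2 * Complex.I) • (M.map Complex.im).map Complex.ofReal := by
  ext i j
  rw [sub_apply, conjTranspose_apply, hM.apply i j, smul_apply, map_apply, map_apply, smul_eq_mul,
    Complex.star_def, Complex.sub_conj]
  push_cast
  ring

variable [Fintype n]

theorem conjTranspose_fromRows_mul_fromBlocks_mul_fromRows [DecidableEq n] {k R : Type*} [Ring R]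
    [StarRing R] (X Y : Matrix n k R) :
    (fromRows X Y)ᴴ * (fromBlocks 0 1 (-1) 0 : Matrix (n ⊕ n) (n ⊕ n) R) * fromRows X Y =
      Xᴴ * Y - Yᴴ * X := by
  rw [conjTranspose_fromRows_eq_fromCols_conjTranspose, fromCols_mul_fromBlocks,
    fromCols_mul_fromRows]
  simp [sub_eq_neg_add, add_comm]

theorem conjTranspose_map_ofReal_mul_mul_eq {S J : Matrix n n ℝ}
    (h : Sᵀ * J * S = J) :
    (S.map Complex.ofReal)ᴴ * J.map Complex.ofReal * S.map Complex.ofReal =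
      J.map Complex.ofReal := by
  rw [← conjTranspose_map _ fun x ↦ (Complex.conj_ofReal x).symm,
    conjTranspose_eq_transpose_of_trivial]
  have hmap : (Sᵀ * J * S).map Complex.ofRealHom = J.map Complex.ofRealHom := by rw [h]
  rwa [Matrix.map_mul, Matrix.map_mul] at hmap

theorem re_star_dotProduct_map_ofReal_mulVec (K : Matrix n n ℝ) (v : n → ℂ) :
    (star v ⬝ᵥ K.map Complex.ofReal *ᵥ v).re =
      (fun i ↦ (v i).re) ⬝ᵥ K *ᵥ (fun i ↦ (v i).re) +
        (fun i ↦ (v i).im) ⬝ᵥ K *ᵥ (fun i ↦ (v i).im) := by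
  simp only [dotProduct, mulVec, Pi.star_apply, map_apply, Finset.mul_sum, Complex.re_sum,
    ← Finset.sum_add_distrib]
  refine Finset.sum_congr rfl fun i _ ↦ Finset.sum_congr rfl fun j _ ↦ ?_
  simp [Complex.mul_re, Complex.mul_im]

theorem PosDef.map_ofReal {K : Matrix n n ℝ} (hK : K.PosDef) :
    (K.map Complex.ofReal).PosDef := by
  have hherm : (K.map Complex.ofReal).IsHermitian :=
    hK.isHermitian.map _ fun x ↦ (Complex.conj_ofReal x).symm
  refine posDef_iff_dotProduct_mulVec.mpr ⟨hherm, fun v hv ↦ Complex.pos_iff.mpr ⟨?_, ?_⟩⟩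
  · have hreim : (fun i ↦ (v i).re) ≠ 0 ∨ (fun i ↦ (v i).im) ≠ 0 := by
      contrapose! hv
      exact funext fun i ↦ Complex.ext (congrFun hv.1 i) (congrFun hv.2 i)
    rw [re_star_dotProduct_map_ofReal_mulVec]
    rcases hreim with hre | him
    · exact add_pos_of_pos_of_nonneg (hK.dotProduct_mulVec_pos hre)
        (hK.posSemidef.dotProduct_mulVec_nonneg _)
    · exact add_pos_of_nonneg_of_pos (hK.posSemidef.dotProduct_mulVec_nonneg _)
        (hK.dotProduct_mulVec_pos him)
  · exact (hherm.im_star_dotProduct_mulVec_self v).symm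

theorem isUnit_det_of_conjTranspose_mul_sub_eq_smul_posDef [DecidableEq n] {K : Type*} [Field K]
    [PartialOrder K] [StarRing K] {α γ P : Matrix n n K} {c : K} (hc : c ≠ 0) (hP : P.PosDef)
    (h : αᴴ * γ - γᴴ * α = c • P) : IsUnit α.det := by
  rw [isUnit_iff_ne_zero, Ne, ← exists_mulVec_eq_zero_iff]
  rintro ⟨v, hv, hαv⟩
  have hform : star v ⬝ᵥ (αᴴ * γ - γᴴ * α) *ᵥ v = 0 := by
    rw [sub_mulVec, ← mulVec_mulVec, ← mulVec_mulVec, hαv, dotProduct_sub, dotProduct_mulVec,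
      ← star_mulVec, hαv]
    simp
  rw [h, smul_mulVec, dotProduct_smul, smul_eq_mul, mul_eq_zero] at hform
  exact hform.elim hc (hP.dotProduct_mulVec_pos hv).ne'

end Matrix

theorem siegel_A_plus_BM_invertible (n : ℕ)
    (A B C D : Matrix (Fin n) (Fin n) ℝ)
    (hS : (fromBlocks A B C D)ᵀ * (fromBlocks 0 1 (-1) 0) * (fromBlocks A B C D) =
      (fromBlocks 0 1 (-1) 0 : Matrix (Fin n ⊕ Fin n) (Fin n ⊕ Fin n) ℝ))
    (M : Matrix (Fin n) (Fin n) ℂ) (hM : M.IsSymm)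
    (hMim : (Matrix.of fun i j => (M i j).im).PosDef) :
    IsUnit (A.map (Complex.ofReal) + B.map (Complex.ofReal) * M).det := by
  set S := (fromBlocks A B C D).map Complex.ofReal
  set J : Matrix (Fin n ⊕ Fin n) (Fin n ⊕ Fin n) ℂ := fromBlocks 0 1 (-1) 0
  set X : Matrix (Fin n ⊕ Fin n) (Fin n) ℂ := fromRows 1 M
  set α := A.map Complex.ofReal + B.map Complex.ofReal * M
  set γ := C.map Complex.ofReal + D.map Complex.ofReal * M
  have hSJ : Sᴴ * J * S = J := by
    have hJ : (fromBlocks 0 1 (-1) 0 : Matrix (Fin n ⊕ Fin n) (Fin n ⊕ Fin n) ℝ).map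
        Complex.ofReal = J := by
      simp [J, fromBlocks_map, Matrix.map_neg]
    rw [← hJ]
    exact conjTranspose_map_ofReal_mul_mul_eq hS
  have hSX : S * X = fromRows α γ := by
    simp only [S, X]
    rw [fromBlocks_map, fromBlocks_mul_fromRows]
    simp [α, γ]
  have hform : αᴴ * γ - γᴴ * α = M - Mᴴ := by
    calc αᴴ * γ - γᴴ * α = (S * X)ᴴ * J * (S * X) := by
          rw [hSX, conjTranspose_fromRows_mul_fromBlocks_mul_fromRows]
      _ = Xᴴ * (Sᴴ * J * S) * X := by simp only [conjTranspose_mul, Matrix.mul_assoc]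
      _ = M - Mᴴ := by
          rw [hSJ, conjTranspose_fromRows_mul_fromBlocks_mul_fromRows]
          simp
  rw [hM.sub_conjTranspose_eq] at hform
  exact isUnit_det_of_conjTranspose_mul_sub_eq_smul_posDef (by simp) hMim.map_ofReal hform
end

section
/- The action of the symplectic group on the Siegel half-space given by α(S)M = (C + DM)(A + BM)⁻¹ is transitive: for any M, M' in Σ(n) there exists a real symplectic matrix S with M' = α(S)M. -/
/-!
Write `M = X + iY` and `M' = X' + iY'` with `Y = R²`, `Y' = R'²` for positive definite square roots
`R`, `R'`. The block lower-triangular matrix `S = [[A, 0], [C, D]]` with `A = R'⁻¹R`, `D = R'R⁻¹`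
and `C = X'A - DX` is symplectic because `AᵀD = 1` and `AᵀC` is symmetric, and it acts by
`M ↦ (C + DM)A⁻¹`. Since `C + DX = X'A` and `DY = R'R = Y'A`, we get `C + DM = M'A`, i.e. `S` sends
`M` to `M'`.
-/

open Matrix

noncomputable def siegelAction {n : ℕ}
    (S : Matrix (Fin n ⊕ Fin n) (Fin n ⊕ Fin n) ℝ)
    (M : Matrix (Fin n) (Fin n) ℂ) : Matrix (Fin n) (Fin n) ℂ :=
  (S.toBlocks₂₁.map (Complex.ofReal) + S.toBlocks₂₂.map (Complex.ofReal) * M) *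
    (S.toBlocks₁₁.map (Complex.ofReal) + S.toBlocks₁₂.map (Complex.ofReal) * M)⁻¹

namespace Matrix

variable {ι : Type*} [Fintype ι] [DecidableEq ι]

open scoped MatrixOrder in
theorem PosDef.exists_posDef_mul_self {Y : Matrix ι ι ℝ} (hY : Y.PosDef) :
    ∃ R : Matrix ι ι ℝ, R.PosDef ∧ R * R = Y :=
  ⟨CFC.sqrt Y, hY.isStrictlyPositive.sqrt.posDef, CFC.sqrt_mul_sqrt_self Y hY.posSemidef.nonneg⟩

omit [Fintype ι] [DecidableEq ι] in
theorem PosDef.transpose_eq_self {R : Matrix ι ι ℝ} (hR : R.PosDef) : Rᵀ = R :=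
  (isHermitian_iff_isSymm.mp hR.isHermitian).eq

theorem transpose_mul_sub_eq_transpose_mul {R : Type*} [CommRing R] {A D X X' : Matrix ι ι R}
    (hX : Xᵀ = X) (hX' : X'ᵀ = X') (hAD : Aᵀ * D = 1) :
    Aᵀ * (X' * A - D * X) = (X' * A - D * X)ᵀ * A := by
  have hDA : Dᵀ * A = 1 := by simpa using congrArg transpose hAD
  rw [transpose_sub, Matrix.mul_sub, Matrix.sub_mul, transpose_mul, transpose_mul, hX, hX',
    ← Matrix.mul_assoc _ D, hAD, Matrix.mul_assoc X, hDA, Matrix.one_mul, Matrix.mul_one,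
    Matrix.mul_assoc]

theorem exists_lowerTriangular_transport {X Y X' Y' : Matrix ι ι ℝ}
    (hX : Xᵀ = X) (hX' : X'ᵀ = X') (hY : Y.PosDef) (hY' : Y'.PosDef) :
    ∃ A C D : Matrix ι ι ℝ, IsUnit A.det ∧ Aᵀ * D = 1 ∧ Aᵀ * C = Cᵀ * A ∧
      C + D * X = X' * A ∧ D * Y = Y' * A := by
  obtain ⟨R, hRpos, rfl⟩ := hY.exists_posDef_mul_self
  obtain ⟨R', hR'pos, rfl⟩ := hY'.exists_posDef_mul_self
  have hR := isUnit_iff_isUnit_det R |>.mp hRpos.isUnit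
  have hR' := isUnit_iff_isUnit_det R' |>.mp hR'pos.isUnit
  have hAD : (R'⁻¹ * R)ᵀ * (R' * R⁻¹) = 1 := by
    rw [transpose_mul, transpose_nonsing_inv, hRpos.transpose_eq_self,
      hR'pos.transpose_eq_self, Matrix.mul_assoc, nonsing_inv_mul_cancel_left _ _ hR',
      mul_nonsing_inv _ hR]
  refine ⟨R'⁻¹ * R, _, R' * R⁻¹, ?_, hAD, transpose_mul_sub_eq_transpose_mul hX hX' hAD,
    sub_add_cancel _ _, ?_⟩
  · simpa [det_mul] using (isUnit_nonsing_inv_det R' hR').mul hR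
  · rw [Matrix.mul_assoc, nonsing_inv_mul_cancel_left _ _ hR, Matrix.mul_assoc,
      mul_nonsing_inv_cancel_left _ _ hR']

theorem fromBlocks_zero₁₂_transpose_mul_mul_self {R : Type*} [CommRing R]
    {A C D : Matrix ι ι R} (hAD : Aᵀ * D = 1) (hAC : Aᵀ * C = Cᵀ * A) :
    (fromBlocks A 0 C D)ᵀ * fromBlocks 0 1 (-1) 0 * fromBlocks A 0 C D =
      fromBlocks 0 1 (-1) 0 := by
  have hDA : Dᵀ * A = 1 := by simpa using congrArg transpose hAD
  simp [fromBlocks_transpose, fromBlocks_multiply, hAD, hDA, hAC]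

omit [DecidableEq ι] in
theorem map_ofReal_mul (P Q : Matrix ι ι ℝ) :
    (P * Q).map Complex.ofReal = P.map Complex.ofReal * Q.map Complex.ofReal :=
  Matrix.map_mul (f := Complex.ofRealHom)

omit [Fintype ι] [DecidableEq ι] in
theorem map_re_add_I_smul_map_im (M : Matrix ι ι ℂ) :
    (M.map Complex.re).map Complex.ofReal + Complex.I • (M.map Complex.im).map Complex.ofReal =
      M := by
  ext i j
  simp [mul_comm Complex.I, Complex.re_add_im]

omit [DecidableEq ι] in
theorem map_ofReal_add_mul_eq_mul_map_ofReal {A C D X Y X' Y' : Matrix ι ι ℝ}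
    (hre : C + D * X = X' * A) (him : D * Y = Y' * A) :
    C.map Complex.ofReal +
        D.map Complex.ofReal * (X.map Complex.ofReal + Complex.I • Y.map Complex.ofReal) =
      (X'.map Complex.ofReal + Complex.I • Y'.map Complex.ofReal) * A.map Complex.ofReal := by
  rw [Matrix.mul_add, Matrix.add_mul, mul_smul_comm, smul_mul_assoc, ← map_ofReal_mul,
    ← map_ofReal_mul, ← map_ofReal_mul, ← map_ofReal_mul, ← him, ← hre, ← add_assoc,
    ← Matrix.map_add _ Complex.ofReal_add]

end Matrix

theorem siegelAction_fromBlocks_zero₁₂ {n : ℕ} {A C D : Matrix (Fin n) (Fin n) ℝ}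
    {M M' : Matrix (Fin n) (Fin n) ℂ} (hA : IsUnit A.det)
    (h : C.map Complex.ofReal + D.map Complex.ofReal * M = M' * A.map Complex.ofReal) :
    siegelAction (fromBlocks A 0 C D) M = M' := by
  have hA' : IsUnit (A.map Complex.ofReal).det := by
    have := hA.map Complex.ofRealHom
    rwa [RingHom.map_det] at this
  simp only [siegelAction, toBlocks_fromBlocks₁₁, toBlocks_fromBlocks₁₂, toBlocks_fromBlocks₂₁,
    toBlocks_fromBlocks₂₂, Matrix.map_zero _ Complex.ofReal_zero, Matrix.zero_mul, add_zero, h,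
    mul_nonsing_inv_cancel_right _ _ hA']

theorem siegel_action_transitive (n : ℕ)
    (M M' : Matrix (Fin n) (Fin n) ℂ)
    (hM : M.IsSymm) (hM' : M'.IsSymm)
    (hMim : (Matrix.of fun i j => (M i j).im).PosDef)
    (hM'im : (Matrix.of fun i j => (M' i j).im).PosDef) :
    ∃ S : Matrix (Fin n ⊕ Fin n) (Fin n ⊕ Fin n) ℝ,
      Sᵀ * (fromBlocks 0 1 (-1) 0) * S =
        (fromBlocks 0 1 (-1) 0 : Matrix (Fin n ⊕ Fin n) (Fin n ⊕ Fin n) ℝ) ∧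
      M' = siegelAction S M := by
  obtain ⟨A, C, D, hA, hAD, hAC, hre, him⟩ :=
    exists_lowerTriangular_transport (Y := M.map Complex.im) (Y' := M'.map Complex.im)
      (hM.map Complex.re).eq (hM'.map Complex.re).eq hMim hM'im
  refine ⟨fromBlocks A 0 C D, fromBlocks_zero₁₂_transpose_mul_mul_self hAD hAC, ?_⟩
  refine (siegelAction_fromBlocks_zero₁₂ hA ?_).symm
  simpa only [map_re_add_I_smul_map_im] using map_ofReal_add_mul_eq_mul_map_ofReal hre him
end

section
/- With U_φ the wavepacket transform as above, one has the intertwining relations U_φ(x_j ψ)(x,p) = (x_j/2 + iℏ ∂_{p_j}) U_φψ(x,p) and U_φ(−iℏ ∂_{x_j}ψ)(x,p) = (p_j/2 − iℏ ∂_{x_j}) U_φψ(x,p) for all Schwartz ψ. -/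
/-!
Both relations come from differentiating under the integral sign. In `p_j` only the phases
depend on `p`: the prefactor `e^{(i/2ℏ) p·x}` contributes `(i/2ℏ) x_j`, and the phase
`e^{-(i/ℏ) p·x'}` brings down `-(i/ℏ) x'_j`, i.e. replaces `ψ` by `x'_j ψ`; dominated
convergence applies because `x'_j ψ` is integrable and the phases have modulus one.
In `x_j`, the substitution `x' = x - y` moves the window to `conj φ(y)`, so that `x` enters only
through `ψ(x - y)` and the prefactor `e^{-(i/2ℏ) p·x}`; differentiating produces `∂_j ψ` and
`-(i/2ℏ) p_j`, with `∂_j ψ` bounded.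
-/

open MeasureTheory Complex Real

noncomputable def wavepacket {n : ℕ} (ℏ : ℝ) (φ : (Fin n → ℝ) → ℂ)
    (ψ : (Fin n → ℝ) → ℂ) : (Fin n → ℝ) × (Fin n → ℝ) → ℂ := fun z =>
  ((2 * π * ℏ) ^ (-(n : ℝ) / 2) : ℝ) *
    Complex.exp ((Complex.I / (2 * ℏ)) * (∑ i, z.2 i * z.1 i : ℝ)) *
    ∫ x' : Fin n → ℝ,
      Complex.exp (-(Complex.I / ℏ) * (∑ i, z.2 i * x' i : ℝ)) * ψ x' *
        (starRingEnd ℂ) (φ (z.1 - x'))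

section

variable {ι : Type*} [Fintype ι] [DecidableEq ι]

theorem hasDerivAt_sum_update_mul (q z : ι → ℝ) (j : ι) (t : ℝ) :
    HasDerivAt (fun s => ∑ i, Function.update q j s i * z i) (z j) t := by
  have h i := (hasDerivAt_pi.1 (hasDerivAt_update q j t) i).mul_const (z i)
  simpa [Pi.single_apply] using HasDerivAt.fun_sum (u := Finset.univ) fun i _ => h i

theorem hasDerivAt_cexp_mul_sum_update_mul (c : ℂ) (q z : ι → ℝ) (j : ι) (t : ℝ) :
    HasDerivAt (fun s => cexp (c * ↑(∑ i, Function.update q j s i * z i)))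
      (c * z j * cexp (c * ↑(∑ i, Function.update q j t i * z i))) t := by
  simpa [mul_comm] using ((hasDerivAt_sum_update_mul q z j t).ofReal_comp.const_mul c).cexp

theorem norm_cexp_mul_ofReal {c : ℂ} (hc : c.re = 0) (r : ℝ) : ‖cexp (c * r)‖ = 1 := by
  simp [Complex.norm_exp, hc]

theorem hasDerivAt_integral_cexp_mul_sum_update_mul {μ : Measure (ι → ℝ)} {c : ℂ}
    (hc : c.re = 0) {g : (ι → ℝ) → ℂ} (hg : Integrable g μ) (j : ι)
    (hjg : Integrable (fun y => (y j : ℂ) * g y) μ) (p : ι → ℝ) :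
    HasDerivAt (fun t => ∫ y, cexp (c * ↑(∑ i, Function.update p j t i * y i)) * g y ∂μ)
      (∫ y, c * y j * cexp (c * ↑(∑ i, p i * y i)) * g y ∂μ) (p j) := by
  have hmeas (t : ℝ) : AEStronglyMeasurable
      (fun y => cexp (c * ↑(∑ i, Function.update p j t i * y i)) * g y) μ :=
    (Continuous.aestronglyMeasurable (by fun_prop)).mul hg.aestronglyMeasurable
  have hint : Integrable
      (fun y => cexp (c * ↑(∑ i, Function.update p j (p j) i * y i)) * g y) μ :=
    hg.bdd_mul (c := 1) (Continuous.aestronglyMeasurable (by fun_prop))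
      (.of_forall fun y => (norm_cexp_mul_ofReal hc _).le)
  have := hasDerivAt_integral_of_dominated_loc_of_deriv_le (μ := μ) (x₀ := p j)
    (F' := fun t y => c * y j * cexp (c * ↑(∑ i, Function.update p j t i * y i)) * g y)
    (bound := fun y => ‖c‖ * ‖(y j : ℂ) * g y‖) Filter.univ_mem (.of_forall hmeas) hint
    ((Continuous.aestronglyMeasurable (by fun_prop)).mul hg.aestronglyMeasurable)
    (.of_forall fun y t _ => le_of_eq (by simp only [norm_mul, norm_cexp_mul_ofReal hc]; ring))
    (hjg.norm.const_mul _)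
    (.of_forall fun y t _ => (hasDerivAt_cexp_mul_sum_update_mul c p y j t).mul_const (g y))
  simpa using this.2

end

theorem SchwartzMap.hasDerivAt_integral_mul_comp_sub {E : Type*} [NormedAddCommGroup E]
    [NormedSpace ℝ E] [MeasurableSpace E] [OpensMeasurableSpace E] {μ : Measure E}
    (ψ : SchwartzMap E ℂ) {g : E → ℂ} (hg : Integrable g μ) {γ : ℝ → E} {v : E}
    (hγ : ∀ t, HasDerivAt γ v t) (t₀ : ℝ) :
    HasDerivAt (fun t => ∫ y, g y * ψ (γ t - y) ∂μ)
      (∫ y, g y * fderiv ℝ ψ (γ t₀ - y) v ∂μ) t₀ := by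
  have hγc : Continuous γ := continuous_iff_continuousAt.2 fun t => (hγ t).continuousAt
  have hψ' : Continuous (fderiv ℝ ψ) := (SchwartzMap.fderivCLM ℝ E ℂ ψ).continuous
  obtain ⟨M, hM⟩ : ∃ M, ∀ z, ‖fderiv ℝ ψ z‖ ≤ M :=
    ⟨_, fun z => by
      simpa using SchwartzMap.norm_le_seminorm ℝ (SchwartzMap.fderivCLM ℝ E ℂ ψ) z⟩
  have := hasDerivAt_integral_of_dominated_loc_of_deriv_le (μ := μ) (x₀ := t₀)
    (F := fun t y => g y * ψ (γ t - y))
    (F' := fun t y => g y * fderiv ℝ ψ (γ t - y) v)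
    (bound := fun y => ‖g y‖ * (M * ‖v‖))
    Filter.univ_mem
    (.of_forall fun t =>
      hg.aestronglyMeasurable.mul (Continuous.aestronglyMeasurable (by fun_prop)))
    (hg.mul_bdd (Continuous.aestronglyMeasurable (by fun_prop))
      (.of_forall fun y => SchwartzMap.norm_le_seminorm ℝ ψ _))
    (hg.aestronglyMeasurable.mul (Continuous.aestronglyMeasurable (by fun_prop)))
    (.of_forall fun y t _ => by
      rw [norm_mul]
      gcongr
      exact ((fderiv ℝ ψ _).le_opNorm v).trans (by gcongr; exact hM _))
    (hg.norm.mul_const _)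
    (.of_forall fun y t _ =>
      (ψ.differentiableAt.hasFDerivAt.comp_hasDerivAt t ((hγ t).sub_const y)).const_mul (g y))
  exact this.2

theorem SchwartzMap.integrable_coord_mul {ι : Type*} [Fintype ι] {μ : Measure (ι → ℝ)}
    [μ.HasTemperateGrowth] (ψ : SchwartzMap (ι → ℝ) ℂ) (j : ι) :
    Integrable (fun y => (y j : ℂ) * ψ y) μ :=
  (ψ.integrable_pow_mul μ 1).mono' (Continuous.aestronglyMeasurable (by fun_prop))
    (.of_forall fun y => by
      simpa using mul_le_mul_of_nonneg_right (norm_le_pi_norm y j) (norm_nonneg (ψ y)))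

section Wavepacket

variable {n : ℕ} (ℏ : ℝ)

theorem wavepacket_const_mul (φ f : (Fin n → ℝ) → ℂ) (c : ℂ)
    (z : (Fin n → ℝ) × (Fin n → ℝ)) :
    wavepacket ℏ φ (fun y => c * f y) z = c * wavepacket ℏ φ f z := by
  simp only [wavepacket, mul_assoc, mul_left_comm _ c, integral_const_mul]

theorem wavepacket_eq_integral_comp_sub (φ f : (Fin n → ℝ) → ℂ) (z p : Fin n → ℝ) :
    wavepacket ℏ φ f (z, p) = ((2 * π * ℏ) ^ (-(n : ℝ) / 2) : ℝ) *
      cexp (-(I / (2 * ℏ)) * ↑(∑ i, z i * p i)) *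
      ∫ y, cexp (I / ℏ * ↑(∑ i, p i * y i)) * starRingEnd ℂ (φ y) * f (z - y) := by
  have hphase (y : Fin n → ℝ) : cexp (-(I / ℏ) * ↑(∑ i, p i * (z - y) i)) =
      cexp (-(I / ℏ) * ↑(∑ i, p i * z i)) * cexp (I / ℏ * ↑(∑ i, p i * y i)) := by
    simp only [Pi.sub_apply, mul_sub, Finset.sum_sub_distrib, ← Complex.exp_add]
    push_cast
    ring_nf
  rw [wavepacket, ← integral_sub_left_eq_self _ volume z]
  simp only [sub_sub_cancel, hphase, mul_assoc, integral_const_mul]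
  simp only [← mul_assoc, ← Complex.exp_add]
  congr 3
  · simp only [mul_comm (z _)]
    ring
  · funext y
    ring

theorem hasDerivAt_wavepacket_update_momentum (φ ψ : SchwartzMap (Fin n → ℝ) ℂ)
    (x p : Fin n → ℝ) (j : Fin n) :
    HasDerivAt (fun t => wavepacket ℏ φ ψ (x, Function.update p j t))
      (I / (2 * ℏ) * x j * wavepacket ℏ φ ψ (x, p) -
        I / ℏ * wavepacket ℏ φ (fun y => (y j : ℂ) * ψ y) (x, p)) (p j) := by
  have hφ (y : Fin n → ℝ) :
      ‖starRingEnd ℂ (φ (x - y))‖ ≤ SchwartzMap.seminorm ℝ 0 0 φ := by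
    simpa using SchwartzMap.norm_le_seminorm ℝ φ (x - y)
  have hφm : AEStronglyMeasurable (fun y => starRingEnd ℂ (φ (x - y))) :=
    Continuous.aestronglyMeasurable (by fun_prop)
  have hg := ψ.integrable.mul_bdd hφm (.of_forall hφ)
  have hjg := (ψ.integrable_coord_mul (μ := volume) j).mul_bdd hφm (.of_forall hφ)
  simp only [mul_assoc] at hjg
  have hE := hasDerivAt_cexp_mul_sum_update_mul (I / (2 * ℏ)) p x j (p j)
  have hK :=
    hasDerivAt_integral_cexp_mul_sum_update_mul (c := -(I / ℏ)) (by simp) hg j hjg p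
  have hK' : ∫ y, -(I / ℏ) * y j * cexp (-(I / ℏ) * ↑(∑ i, p i * y i)) *
        (ψ y * starRingEnd ℂ (φ (x - y))) =
      -(I / ℏ) * ∫ y, cexp (-(I / ℏ) * ↑(∑ i, p i * y i)) * ((y j : ℂ) * ψ y) *
        starRingEnd ℂ (φ (x - y)) := by
    rw [← integral_const_mul]
    congr 1 with y
    ring
  refine
    ((hE.const_mul (((2 * π * ℏ) ^ (-(n : ℝ) / 2) : ℝ) : ℂ)).fun_mul hK).congr_deriv ?_
      |>.congr_of_eventuallyEq (.of_forall fun t => ?_)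
  · rw [hK']
    simp only [wavepacket, Function.update_eq_self, mul_assoc]
    ring
  · simp only [wavepacket, mul_assoc]

theorem hasDerivAt_wavepacket_update_position (φ ψ : SchwartzMap (Fin n → ℝ) ℂ)
    (x p : Fin n → ℝ) (j : Fin n) :
    HasDerivAt (fun t => wavepacket ℏ φ ψ (Function.update x j t, p))
      (-(I / (2 * ℏ)) * p j * wavepacket ℏ φ ψ (x, p) +
        wavepacket ℏ φ (fun y => fderiv ℝ ψ y (Pi.single j 1)) (x, p)) (x j) := by
  simp only [wavepacket_eq_integral_comp_sub]
  have hg :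
      Integrable (fun y => cexp (I / ℏ * ↑(∑ i, p i * y i)) * starRingEnd ℂ (φ y)) :=
    φ.integrable.norm.mono' (Continuous.aestronglyMeasurable (by fun_prop))
      (.of_forall fun y => le_of_eq (by
        rw [norm_mul, norm_cexp_mul_ofReal (by simp), RCLike.norm_conj, one_mul]))
  have hE := hasDerivAt_cexp_mul_sum_update_mul (-(I / (2 * ℏ))) x p j (x j)
  have hK := ψ.hasDerivAt_integral_mul_comp_sub hg (hasDerivAt_update x j) (x j)
  refine ((hE.const_mul _).fun_mul hK).congr_deriv ?_
  simp only [Function.update_eq_self]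
  ring

end Wavepacket

theorem wavepacket_intertwining (n : ℕ) (ℏ : ℝ) (hℏ : 0 < ℏ)
    (φ ψ : SchwartzMap (Fin n → ℝ) ℂ) (j : Fin n)
    (x p : Fin n → ℝ) :
    wavepacket ℏ φ (fun x' => (x' j : ℂ) * ψ x') (x, p) =
        ((x j : ℂ) / 2) * wavepacket ℏ φ ψ (x, p) +
          Complex.I * ℏ *
            deriv (fun t : ℝ => wavepacket ℏ φ ψ (x, Function.update p j t)) (p j) ∧
    wavepacket ℏ φ (fun x' => -Complex.I * ℏ * fderiv ℝ (⇑ψ) x' (Pi.single j 1)) (x, p) =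
        ((p j : ℂ) / 2) * wavepacket ℏ φ ψ (x, p) -
          Complex.I * ℏ *
            deriv (fun t : ℝ => wavepacket ℏ φ ψ (Function.update x j t, p)) (x j) := by
  have hℏ' : (ℏ : ℂ) ≠ 0 := by exact_mod_cast hℏ.ne'
  rw [(hasDerivAt_wavepacket_update_momentum ℏ φ ψ x p j).deriv,
    (hasDerivAt_wavepacket_update_position ℏ φ ψ x p j).deriv, wavepacket_const_mul]
  constructor <;> field_simp <;> ring_nf <;> rw [I_sq] <;> ring
end
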